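/- arXiv:2511.17020 — 2 statements merged into one kernel-verified Lean document; each statement's English description precedes it below -/
import Mathlib

section
/- The weighted empirical τ-quantile of finitely many Lipschitz functions is Lipschitz: if g₁, …, g_N : ℝⁿ → ℝ are each L-Lipschitz and w₁,…,w_N > 0 sum to 1, then Q(x) = inf{t : Σᵢ wᵢ·1{gᵢ(x) ≤ t} ≥ τ} is L-Lipschitz on ℝⁿ. -/
/-!
The τ-quantile of a weighted finite family of reals is monotone and commutes with adding a
constant to every member, so it is 1-Lipschitz for the sup distance on `ι → ℝ`. The map
`x ↦ (gᵢ x)ᵢ` is `L`-Lipschitz into that space, and the composite is the quantile `Q`.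
-/

open Finset

section WeightedQuantile

variable {ι : Type*} [Fintype ι] (w : ι → ℝ)

noncomputable def weightedCDF (v : ι → ℝ) (t : ℝ) : ℝ :=
  ∑ i, if v i ≤ t then w i else 0

noncomputable def weightedQuantile (τ : ℝ) (v : ι → ℝ) : ℝ :=
  sInf {t : ℝ | τ ≤ weightedCDF w v t}

variable {w}

lemma weightedCDF_eq_sum_of_forall_le {v : ι → ℝ} {t : ℝ} (h : ∀ i, v i ≤ t) :
    weightedCDF w v t = ∑ i, w i :=
  sum_congr rfl fun i _ => if_pos (h i)

lemma weightedCDF_eq_zero_of_forall_lt {v : ι → ℝ} {t : ℝ} (h : ∀ i, t < v i) :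
    weightedCDF w v t = 0 :=
  sum_eq_zero fun i _ => if_neg (h i).not_ge

lemma weightedCDF_le_weightedCDF_add (hw : ∀ i, 0 ≤ w i) {v v' : ι → ℝ} {c : ℝ}
    (h : ∀ i, v i ≤ v' i + c) (t : ℝ) :
    weightedCDF w v' t ≤ weightedCDF w v (t + c) := by
  refine sum_le_sum fun i _ => ?_
  split_ifs with h' h''
  · exact le_rfl
  · exact absurd (by linarith [h i]) h''
  · exact hw i
  · exact le_rfl

lemma nonempty_setOf_le_weightedCDF {τ : ℝ} (hτ : τ ≤ ∑ i, w i) (v : ι → ℝ) :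
    {t : ℝ | τ ≤ weightedCDF w v t}.Nonempty := by
  obtain ⟨M, hM⟩ := Finite.bddAbove_range v
  exact ⟨M, by simpa [weightedCDF_eq_sum_of_forall_le fun i => hM ⟨i, rfl⟩] using hτ⟩

lemma bddBelow_setOf_le_weightedCDF {τ : ℝ} (hτ : 0 < τ) (v : ι → ℝ) :
    BddBelow {t : ℝ | τ ≤ weightedCDF w v t} := by
  obtain ⟨m, hm⟩ := Finite.bddBelow_range v
  refine ⟨m, fun t ht => le_of_not_gt fun htm => ?_⟩
  have : weightedCDF w v t = 0 :=
    weightedCDF_eq_zero_of_forall_lt fun i => htm.trans_le (hm ⟨i, rfl⟩)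
  exact (ht.trans_eq this).not_gt hτ

lemma weightedQuantile_le_add (hw : ∀ i, 0 ≤ w i) {τ : ℝ} (hτ₀ : 0 < τ) (hτ : τ ≤ ∑ i, w i)
    {v v' : ι → ℝ} {c : ℝ} (h : ∀ i, v i ≤ v' i + c) :
    weightedQuantile w τ v ≤ weightedQuantile w τ v' + c := by
  rw [← sub_le_iff_le_add]
  refine le_csInf (nonempty_setOf_le_weightedCDF hτ v') fun t ht => ?_
  rw [sub_le_iff_le_add]
  exact csInf_le (bddBelow_setOf_le_weightedCDF hτ₀ v)
    (ht.trans (weightedCDF_le_weightedCDF_add hw h t))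

lemma lipschitzWith_one_weightedQuantile (hw : ∀ i, 0 ≤ w i) {τ : ℝ} (hτ₀ : 0 < τ)
    (hτ : τ ≤ ∑ i, w i) : LipschitzWith 1 (weightedQuantile w τ) :=
  LipschitzWith.of_le_add fun v v' => weightedQuantile_le_add hw hτ₀ hτ fun i =>
    sub_le_iff_le_add'.mp <|
      (le_abs_self _).trans ((Real.dist_eq _ _).symm.trans_le (dist_le_pi_dist v v' i))

end WeightedQuantile

lemma LipschitzWith.pi_of_forall {α ι : Type*} [PseudoMetricSpace α] [Fintype ι] {K : NNReal}
    {f : ι → α → ℝ} (hf : ∀ i, LipschitzWith K (f i)) :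
    LipschitzWith K (fun x i => f i x) :=
  LipschitzWith.of_dist_le_mul fun x y =>
    (dist_pi_le_iff (by positivity)).mpr fun i => (hf i).dist_le_mul x y

theorem stmt_15 {n N : ℕ} (g : Fin N → EuclideanSpace ℝ (Fin n) → ℝ)
    (L : NNReal) (hg : ∀ i, LipschitzWith L (g i))
    (w : Fin N → ℝ) (hw : ∀ i, 0 < w i) (hsum : ∑ i, w i = 1)
    (τ : ℝ) (hτ : τ ∈ Set.Ioo (0 : ℝ) 1) :
    LipschitzWith L (fun x => sInf {t : ℝ | τ ≤ ∑ i, if g i x ≤ t then w i else 0}) := by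
  have hQ : LipschitzWith 1 (weightedQuantile w τ) :=
    lipschitzWith_one_weightedQuantile (fun i => (hw i).le) hτ.1 (hsum ▸ hτ.2.le)
  have hcomp := hQ.comp (LipschitzWith.pi_of_forall hg)
  rw [one_mul] at hcomp
  exact hcomp
end

section
/- Let (g_N) be real-valued random functions on a compact set X ⊆ ℝⁿ, each almost surely β-Hölder with a deterministic uniform constant L₂, and g a deterministic α-Hölder function with constant L₁. If g_N(x) → g(x) in probability for each fixed x ∈ X, then sup_{x∈X}|g_N(x) − g(x)| → 0 in probability. -/
open MeasureTheory Filter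

theorem stmt_19 {n : ℕ} {Ω : Type*} [MeasurableSpace Ω] (μ : Measure Ω)
    [IsProbabilityMeasure μ]
    (X : Set (EuclideanSpace ℝ (Fin n))) (hX : IsCompact X)
    (g : ℕ → Ω → EuclideanSpace ℝ (Fin n) → ℝ) (g₀ : EuclideanSpace ℝ (Fin n) → ℝ)
    (α β L₁ L₂ : ℝ) (hα : 0 < α) (hβ : 0 < β) (hL₁ : 0 < L₁) (hL₂ : 0 < L₂)
    (hH : ∀ N : ℕ, ∀ᵐ ω ∂μ, ∀ x₁ ∈ X, ∀ x₂ ∈ X,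
      |g N ω x₁ - g N ω x₂| ≤ L₂ * ‖x₁ - x₂‖ ^ β)
    (hg₀ : ∀ x ∈ X, ∀ y ∈ X, |g₀ x - g₀ y| ≤ L₁ * ‖x - y‖ ^ α)
    (hpt : ∀ x ∈ X, ∀ ε : ℝ, 0 < ε →
      Tendsto (fun N => μ {ω | ε < |g N ω x - g₀ x|}) atTop (nhds 0)) :
    ∀ ε : ℝ, 0 < ε →
      Tendsto (fun N => μ {ω | ε < ⨆ x ∈ X, |g N ω x - g₀ x|}) atTop (nhds 0) := by
  intro ε hε
  -- choose δ
  set δ : ℝ := min ((ε/(4*L₁)) ^ (α⁻¹)) ((ε/(4*L₂)) ^ (β⁻¹)) with hδdef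
  have hδ1pos : (0:ℝ) < (ε/(4*L₁)) ^ (α⁻¹) :=
    Real.rpow_pos_of_pos (div_pos hε (by linarith)) _
  have hδ2pos : (0:ℝ) < (ε/(4*L₂)) ^ (β⁻¹) :=
    Real.rpow_pos_of_pos (div_pos hε (by linarith)) _
  have hδpos : 0 < δ := lt_min hδ1pos hδ2pos
  -- key bounds for t ∈ [0, δ)
  have hbound1 : ∀ t : ℝ, 0 ≤ t → t ≤ δ → L₁ * t ^ α ≤ ε / 4 := by
    intro t ht htδ
    have h1 : t ^ α ≤ ((ε/(4*L₁)) ^ (α⁻¹)) ^ α :=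
      Real.rpow_le_rpow ht (le_trans htδ (min_le_left _ _)) hα.le
    have h2 : ((ε/(4*L₁)) ^ (α⁻¹)) ^ α = ε/(4*L₁) :=
      Real.rpow_inv_rpow (le_of_lt (div_pos hε (by linarith))) hα.ne'
    rw [h2] at h1
    have := mul_le_mul_of_nonneg_left h1 hL₁.le
    calc L₁ * t ^ α ≤ L₁ * (ε/(4*L₁)) := this
      _ = ε / 4 := by field_simp
  have hbound2 : ∀ t : ℝ, 0 ≤ t → t ≤ δ → L₂ * t ^ β ≤ ε / 4 := by
    intro t ht htδ
    have h1 : t ^ β ≤ ((ε/(4*L₂)) ^ (β⁻¹)) ^ β :=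
      Real.rpow_le_rpow ht (le_trans htδ (min_le_right _ _)) hβ.le
    have h2 : ((ε/(4*L₂)) ^ (β⁻¹)) ^ β = ε/(4*L₂) :=
      Real.rpow_inv_rpow (le_of_lt (div_pos hε (by linarith))) hβ.ne'
    rw [h2] at h1
    have := mul_le_mul_of_nonneg_left h1 hL₂.le
    calc L₂ * t ^ β ≤ L₂ * (ε/(4*L₂)) := this
      _ = ε / 4 := by field_simp
  -- finite subcover
  obtain ⟨t, htX, htcov⟩ := hX.elim_nhds_subcover (fun x => Metric.ball x δ)
    (fun x _ => Metric.ball_mem_nhds x hδpos)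
  -- union bound
  have key : ∀ N : ℕ, μ {ω | ε < ⨆ x ∈ X, |g N ω x - g₀ x|}
      ≤ ∑ i ∈ t, μ {ω | ε/2 < |g N ω i - g₀ i|} := by
    intro N
    set B : Set Ω := {ω | ¬ ∀ x₁ ∈ X, ∀ x₂ ∈ X, |g N ω x₁ - g N ω x₂| ≤ L₂ * ‖x₁ - x₂‖ ^ β}
      with hBdef
    have hB : μ B = 0 := by
      have := hH N
      rwa [MeasureTheory.ae_iff] at this
    have hsub : {ω | ε < ⨆ x ∈ X, |g N ω x - g₀ x|}
        ⊆ B ∪ ⋃ i ∈ t, {ω | ε/2 < |g N ω i - g₀ i|} := by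
      intro ω hω
      by_contra hcon
      simp only [Set.mem_union, Set.mem_iUnion, not_or, not_exists] at hcon
      obtain ⟨hωB, hωU⟩ := hcon
      have hHolder : ∀ x₁ ∈ X, ∀ x₂ ∈ X, |g N ω x₁ - g N ω x₂| ≤ L₂ * ‖x₁ - x₂‖ ^ β := by
        by_contra h; exact hωB h
      have hsmall : ∀ i ∈ t, |g N ω i - g₀ i| ≤ ε/2 := by
        intro i hi
        by_contra h
        push_neg at h
        exact hωU i hi h
      -- show sup ≤ ε
      have hle : (⨆ x ∈ X, |g N ω x - g₀ x|) ≤ ε := by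
        apply Real.iSup_le _ hε.le
        intro x
        apply Real.iSup_le _ hε.le
        intro hx
        obtain ⟨i, hit, hxball⟩ : ∃ i ∈ t, x ∈ Metric.ball i δ := by
          have := htcov hx
          simpa using this
        have hdist : ‖x - i‖ ≤ δ := by
          have := hxball
          rw [Metric.mem_ball] at this
          have : dist x i ≤ δ := this.le
          rwa [dist_eq_norm] at this
        have h1 : |g N ω x - g N ω i| ≤ L₂ * ‖x - i‖ ^ β :=
          hHolder x hx i (htX i hit)
        have h2 : |g₀ i - g₀ x| ≤ L₁ * ‖i - x‖ ^ α := hg₀ i (htX i hit) x hx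
        have hni : ‖i - x‖ = ‖x - i‖ := norm_sub_rev i x
        have h2' : |g₀ i - g₀ x| ≤ L₁ * ‖x - i‖ ^ α := by rwa [hni] at h2
        have h3 : |g N ω i - g₀ i| ≤ ε/2 := hsmall i hit
        have hb1 : L₂ * ‖x - i‖ ^ β ≤ ε/4 := hbound2 _ (norm_nonneg _) hdist
        have hb2 : L₁ * ‖x - i‖ ^ α ≤ ε/4 := hbound1 _ (norm_nonneg _) hdist
        have htri : |g N ω x - g₀ x|
            ≤ |g N ω x - g N ω i| + |g N ω i - g₀ i| + |g₀ i - g₀ x| := by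
          have := abs_sub_le (g N ω x) (g N ω i) (g₀ x)
          have h4 := abs_sub_le (g N ω i) (g₀ i) (g₀ x)
          linarith
        linarith
      exact absurd hω (by simpa using not_lt.mpr hle)
    calc μ {ω | ε < ⨆ x ∈ X, |g N ω x - g₀ x|}
        ≤ μ (B ∪ ⋃ i ∈ t, {ω | ε/2 < |g N ω i - g₀ i|}) := measure_mono hsub
      _ ≤ μ B + μ (⋃ i ∈ t, {ω | ε/2 < |g N ω i - g₀ i|}) := measure_union_le _ _
      _ = μ (⋃ i ∈ t, {ω | ε/2 < |g N ω i - g₀ i|}) := by rw [hB, zero_add]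
      _ ≤ ∑ i ∈ t, μ {ω | ε/2 < |g N ω i - g₀ i|} := measure_biUnion_finset_le _ _
  -- sum tends to zero
  have hsum : Tendsto (fun N => ∑ i ∈ t, μ {ω | ε/2 < |g N ω i - g₀ i|}) atTop (nhds 0) := by
    have := tendsto_finset_sum t (fun i hi => hpt i (htX i hi) (ε/2) (by linarith))
    simpa using this
  exact tendsto_of_tendsto_of_tendsto_of_le_of_le tendsto_const_nhds hsum
    (fun N => zero_le) key
end
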